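/- arXiv:2402.00226 — 2 statements merged into one kernel-verified Lean document; each statement's English description precedes it below -/
import Mathlib

section
/- Assume γ < δ < ω₁, {f_τ : τ ∈ I} is a suitable specializing family with top level γ, Q ⊆ ℚ⁺, A ⊆ I, and X ⊆ T_δ are finite, and X has unique drop-downs to γ. Then there exists a suitable specializing family {g_τ : τ ∈ I} with top level δ such that: (1) f_τ ⊆ g_τ for all τ ∈ I; and (2) for all τ ∈ A, X↾γ and X are (g_τ,Q)-consistent. -/
noncomputable section

/-- The ordinal `ω₁`. -/
def omega1 : Ordinal := (Cardinal.aleph 1).ord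

/-- A normal, infinitely splitting `ω₁`-tree structure on the partial order `α`.
`height x` is the height of `x` (the order type of its set of strict predecessors,
which is linearly ordered by `pred_linear`), and `restrict x β` is the unique node
of height `β` below `x` (for `β ≤ height x`). -/
structure OmegaOneTree (α : Type) [PartialOrder α] where
  height : α → Ordinal
  restrict : α → Ordinal → α
  height_lt_omega1 : ∀ x : α, height x < omega1
  height_strictMono : ∀ {x y : α}, x < y → height x < height y
  pred_linear : ∀ {x y z : α}, y < x → z < x → y ≤ z ∨ z ≤ y
  restrict_le : ∀ (x : α) {β : Ordinal}, β ≤ height x → restrict x β ≤ x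
  height_restrict : ∀ (x : α) {β : Ordinal}, β ≤ height x → height (restrict x β) = β
  restrict_eq : ∀ {x y : α} {β : Ordinal}, y ≤ x → height y = β → restrict x β = y
  level_nonempty : ∀ β : Ordinal, β < omega1 → ∃ x : α, height x = β
  level_countable : ∀ β : Ordinal, {x : α | height x = β}.Countable
  root_exists : ∃ r : α, height r = 0 ∧ ∀ x : α, r ≤ x
  splitting : ∀ x : α, {y : α | x < y ∧ height y = height x + 1}.Infinite
  exists_above : ∀ (x : α) {β : Ordinal}, height x < β → β < omega1 →
    ∃ y : α, x < y ∧ height y = β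
  limit_eq : ∀ {x y : α}, height x = height y → Order.IsSuccLimit (height x) →
    (∀ z : α, z < x ↔ z < y) → x = y

variable {α : Type} [PartialOrder α]

/-- `a` is a tuple all of whose components have height `β`
(i.e. an element of the product tree of height `β`). -/
def IsTupleOfHeight (T : OmegaOneTree α) {m : ℕ} (a : Fin m → α) (β : Ordinal) : Prop :=
  ∀ i, T.height (a i) = β

/-- `a` is a minimal injective tuple of height `β`: it is injective of height `β`
and none of its proper restrictions is injective. -/
def MinimalTuple (T : OmegaOneTree α) {m : ℕ} (a : Fin m → α) (β : Ordinal) : Prop :=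
  IsTupleOfHeight T a β ∧ Function.Injective a ∧
    ∀ γ : Ordinal, γ < β → ¬ Function.Injective (fun i => T.restrict (a i) γ)

/-- `f` is a specializing function on `U^τ↾(β+1)`, where the minimal tuple of index `τ`
is `aτ`.  Here `f` is a total function whose values only matter on tuples of height
`≤ β` lying in `U^τ` (i.e. componentwise above `aτ`, or componentwise strictly
below `aτ`). -/
def IsSpecFun (T : OmegaOneTree α) {n : ℕ} (aτ : Fin (n + 1) → α) (β : Ordinal)
    (f : (Fin (n + 1) → α) → ℚ) : Prop :=
  (∀ (c : Fin (n + 1) → α) (ζ : Ordinal), ζ ≤ β → IsTupleOfHeight T c ζ →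
      (∀ i, c i < aτ i) → f c = -1) ∧
  (∀ (c : Fin (n + 1) → α) (ζ : Ordinal), ζ ≤ β → IsTupleOfHeight T c ζ →
      (∀ i, aτ i ≤ c i) → 0 < f c) ∧
  (∀ (b c : Fin (n + 1) → α) (ζ ξ : Ordinal), ζ ≤ β → ξ ≤ β →
      IsTupleOfHeight T b ζ → IsTupleOfHeight T c ξ →
      (∀ i, aτ i ≤ b i) → (∀ i, aτ i ≤ c i) → (∀ i, b i < c i) → f b < f c)

/-- `g` extends `f` on `U^τ↾(γ+1)` (i.e. `f ⊆ g` for specializing functions with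
top levels `γ ≤` top level of `g`). -/
def SpecExtends (T : OmegaOneTree α) {n : ℕ} (aτ : Fin (n + 1) → α) (γ : Ordinal)
    (f g : (Fin (n + 1) → α) → ℚ) : Prop :=
  ∀ (c : Fin (n + 1) → α) (ζ : Ordinal), ζ ≤ γ → IsTupleOfHeight T c ζ →
    ((∀ i, aτ i ≤ c i) ∨ (∀ i, c i < aτ i)) → g c = f c

/-- `X↾lo` and `X` are `(f,Q)`-consistent: for every `q ∈ Q` and every tuple `c` of
elements of `X` lying in the derived tree of `aτ`, if `f(c↾lo) < q` then `f(c) < q`. -/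
def SpecConsistent (T : OmegaOneTree α) {n : ℕ} (aτ : Fin (n + 1) → α)
    (f : (Fin (n + 1) → α) → ℚ) (lo : Ordinal) (Q : Set ℚ) (X : Set α) : Prop :=
  ∀ q ∈ Q, ∀ c : Fin (n + 1) → α, (∀ i, c i ∈ X) → (∀ i, aτ i ≤ c i) →
    f (fun i => T.restrict (c i) lo) < q → f c < q

/-- The specializing family `{f τ : τ ∈ I}` with top level `γ` is suitable
(relative to the enumeration `amin` of minimal tuples). -/
def SuitableFamily (T : OmegaOneTree α) {n : ℕ} (amin : Ordinal → Fin (n + 1) → α)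
    (I : Set Ordinal) (γ : Ordinal) (f : Ordinal → (Fin (n + 1) → α) → ℚ) : Prop :=
  ∀ lo hi : Ordinal, lo < hi → hi ≤ γ →
    ∀ B : Set Ordinal, B.Finite → B ⊆ I →
      ∀ R : Set ℚ, R.Finite → (∀ q ∈ R, 0 < q) →
        ∀ t : Set α, t.Finite → (∀ x ∈ t, T.height x = hi) →
          ∀ l : ℕ, n ≤ l →
            ∀ a : Fin l → α, Function.Injective a → (∀ i, T.height (a i) = lo) →
              ∀ idx : Fin n → Fin l, Function.Injective idx →
                ∀ c : Fin n → α,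
                  (∀ k, T.height (c k) = hi ∧ c k ∉ t ∧ a (idx k) < c k) →
                  ∃ b : Fin l → α,
                    (∀ i, T.height (b i) = hi ∧ b i ∉ t ∧ a i < b i) ∧
                    (∀ k, b (idx k) = c k) ∧
                    ∀ τ ∈ B, SpecConsistent T (amin τ) (f τ) lo R (Set.range b)


/-!
The extension is obtained by forcing with finite conditions. A condition assigns rational values
to finitely many tuples of the derived trees at levels in `(γ, δ]`; they are positive, above the
value of `f` at the restriction to level `γ`, strictly increasing, and below every `q ∈ Q`
exceeding that value of `f` when the tuple lies below a tuple from `X`. A fresh key can always be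
added below prescribed finite upper bounds, since its lower and upper constraints are finitely
many and separated. Every instance of the suitability requirement at the top level `δ` can be
answered by extending a condition: project the instance to level `max lo γ` (by the suitability of
`f` when `lo < γ`), climb to level `hi` through nodes avoiding the finitely many tuples already
valued (infinite splitting), and add the new tuples with values below the relevant `q`. As `δ` is
countable there are only countably many keys and instances, so the Rasiowa–Sikorski lemma yields
a generic sequence of conditions, and its eventual values form the family `g`.
-/

open Set Function

local infixl:50 " ≺ " => StrongLT

theorem countable_Iic_of_lt_omega1 {o : Ordinal.{0}} (ho : o < omega1) : (Iic o).Countable := by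
  rw [← Iio_insert]
  refine (Cardinal.le_aleph0_iff_set_countable.mp ?_).insert o
  rw [Cardinal.mk_Iio_ordinal, Cardinal.lift_le_aleph0, ← Order.lt_succ_iff, Cardinal.succ_aleph0]
  exact Cardinal.lt_ord.mp ho

theorem exists_notMem_range_of_injective {β : Type*} {l m : ℕ} (b : Fin l → β)
    (idx : Fin m → Fin l) (d : Fin (m + 1) → β) (hd : Injective d) (hdb : ∀ i, d i ∈ range b) :
    ∃ j ∉ range idx, b j ∈ range d := by
  choose φ hφ using hdb
  have hφinj : Injective φ := fun i i' h => hd (by rw [← hφ i, ← hφ i', h])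
  by_contra! hcon
  have hφidx : ∀ i, φ i ∈ range idx := fun i => by_contra fun h => hcon (φ i) h ⟨i, (hφ i).symm⟩
  choose ψ hψ using hφidx
  have hψinj : Injective ψ := fun i i' h => hφinj (by rw [← hψ i, ← hψ i', h])
  simpa using Fintype.card_le_of_injective ψ hψinj

namespace OmegaOneTree

theorem le_total_of_le (T : OmegaOneTree α) {x y z : α} (hy : y ≤ x) (hz : z ≤ x) :
    y ≤ z ∨ z ≤ y := by
  rcases hy.eq_or_lt with rfl | hy
  · exact Or.inr hz
  rcases hz.eq_or_lt with rfl | hz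
  · exact Or.inl hy.le
  exact T.pred_linear hy hz

variable (T : OmegaOneTree α)

theorem height_mono {x y : α} (h : x ≤ y) : T.height x ≤ T.height y := by
  rcases h.eq_or_lt with rfl | h
  · exact le_rfl
  · exact (T.height_strictMono h).le

theorem eq_of_le_of_height_le {x y : α} (h : y ≤ x) (hh : T.height x ≤ T.height y) :
    y = x :=
  h.eq_or_lt.resolve_right fun h' => (T.height_strictMono h').not_ge hh

theorem eq_of_le_of_le_of_height_eq {x y z : α} (hy : y ≤ x) (hz : z ≤ x)
    (hh : T.height y = T.height z) : y = z :=
  (T.le_total_of_le hy hz).elim (fun h => T.eq_of_le_of_height_le h hh.ge)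
    fun h => (T.eq_of_le_of_height_le h hh.le).symm

theorem restrict_self {x : α} {β : Ordinal} (h : T.height x = β) : T.restrict x β = x :=
  T.restrict_eq le_rfl h

theorem restrict_restrict (x : α) {β₁ β₂ : Ordinal} (h12 : β₁ ≤ β₂) (h2 : β₂ ≤ T.height x) :
    T.restrict (T.restrict x β₂) β₁ = T.restrict x β₁ := by
  have h : β₁ ≤ T.height (T.restrict x β₂) := by rwa [T.height_restrict x h2]
  exact (T.restrict_eq ((T.restrict_le _ h).trans (T.restrict_le x h2))
    (T.height_restrict _ h)).symm

theorem restrict_mono (x : α) {β₁ β₂ : Ordinal} (h12 : β₁ ≤ β₂) (h2 : β₂ ≤ T.height x) :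
    T.restrict x β₁ ≤ T.restrict x β₂ :=
  T.restrict_restrict x h12 h2 ▸ T.restrict_le _ (by rwa [T.height_restrict x h2])

theorem restrict_lt_restrict (x : α) {β₁ β₂ : Ordinal} (h12 : β₁ < β₂) (h2 : β₂ ≤ T.height x) :
    T.restrict x β₁ < T.restrict x β₂ := by
  refine (T.restrict_mono x h12.le h2).lt_of_ne fun h => h12.ne ?_
  rw [← T.height_restrict x (h12.le.trans h2), h, T.height_restrict x h2]

theorem restrict_lt_self {x : α} {β : Ordinal} (h : β < T.height x) :
    T.restrict x β < x := by
  simpa only [T.restrict_self rfl] using T.restrict_lt_restrict x h le_rfl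

theorem restrict_eq_restrict_of_le {x y : α} {β : Ordinal} (hyx : y ≤ x) (hβ : β ≤ T.height y) :
    T.restrict x β = T.restrict y β :=
  T.restrict_eq ((T.restrict_le y hβ).trans hyx) (T.height_restrict y hβ)

theorem le_restrict {x y : α} {β : Ordinal} (hyx : y ≤ x) (h1 : T.height y ≤ β)
    (h2 : β ≤ T.height x) : y ≤ T.restrict x β :=
  (T.le_total_of_le (T.restrict_le x h2) hyx).elim
    (fun h => (T.eq_of_le_of_height_le h (by rwa [T.height_restrict x h2])).ge) id

/-- Infinite splitting provides a successor of `u` through which no node of `F ∪ W` passes. -/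
theorem exists_lt_avoiding (u : α) {hi : Ordinal} (hu : T.height u < hi)
    (hhi : hi < omega1) {F W : Set α} (hF : F.Finite) (hW : W.Finite) :
    ∃ v, T.height v = hi ∧ u < v ∧ v ∉ W ∧ ∀ x ∈ F, T.height u < T.height x → ¬ x ≤ v := by
  set μ := T.height u
  obtain ⟨y, ⟨huy, hy⟩, hyF⟩ :=
    ((T.splitting u).sdiff ((hF.union hW).image fun x => T.restrict x (μ + 1))).nonempty
  obtain ⟨v, hyv, hv⟩ : ∃ v, y ≤ v ∧ T.height v = hi := by
    rcases (Order.add_one_le_iff.mpr hu).eq_or_lt with h | h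
    · exact ⟨y, le_rfl, hy.trans h⟩
    · obtain ⟨v, hyv, hv⟩ := T.exists_above y (hy ▸ h) hhi
      exact ⟨v, hyv.le, hv⟩
  have hres : T.restrict v (μ + 1) = y := T.restrict_eq hyv hy
  refine ⟨v, hv, huy.trans_le hyv, fun hvW => hyF ⟨v, Or.inr hvW, hres⟩, fun x hx hux hxv => ?_⟩
  have hμx : μ + 1 ≤ T.height x := Order.add_one_le_iff.mpr hux
  exact hyF ⟨x, Or.inl hx, (T.restrict_eq_restrict_of_le hxv hμx).symm.trans hres⟩

theorem exists_extend_avoiding {l m : ℕ} {μ hi : Ordinal} (hμ : μ < hi) (hhi : hi < omega1)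
    {F t : Set α} (hF : F.Finite) (ht : t.Finite) (bb : Fin l → α) (hbb : ∀ i, T.height (bb i) = μ)
    {idx : Fin m → Fin l} (hidx : Injective idx) (c : Fin m → α)
    (hc : ∀ k, T.height (c k) = hi ∧ c k ∉ t ∧ bb (idx k) < c k) :
    ∃ b : Fin l → α, (∀ i, T.height (b i) = hi ∧ b i ∉ t ∧ bb i < b i) ∧
      (∀ k, b (idx k) = c k) ∧ ∀ j ∉ range idx, ∀ x ∈ F, μ < T.height x → ¬ x ≤ b j := by
  choose v hv using fun j => T.exists_lt_avoiding (bb j) ((hbb j).trans_lt hμ) hhi hF ht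
  have hfree : ∀ j ∉ range idx, extend idx c v j = v j := fun j hj => extend_apply' _ _ _ hj
  refine ⟨extend idx c v, fun i => ?_, hidx.extend_apply c v, fun j hj x hx hμx => ?_⟩
  · by_cases hi : i ∈ range idx
    · obtain ⟨k, rfl⟩ := hi
      rw [hidx.extend_apply]
      exact hc k
    · rw [hfree i hi]
      exact ⟨(hv i).1, (hv i).2.2.1, (hv i).2.1⟩
  · rw [hfree j hj]
    exact (hv j).2.2.2 x hx (by rwa [hbb j])

def restrictTuple {m : ℕ} (c : Fin m → α) (β : Ordinal) : Fin m → α :=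
  fun i => T.restrict (c i) β

variable {T} {m : ℕ} {a b c : Fin m → α} {ζ ξ β β₁ β₂ : Ordinal}

theorem isTupleOfHeight_restrictTuple (hc : IsTupleOfHeight T c ζ) (hβ : β ≤ ζ) :
    IsTupleOfHeight T (T.restrictTuple c β) β := fun i =>
  T.height_restrict (c i) ((hc i).symm ▸ hβ)

theorem restrictTuple_le (hc : IsTupleOfHeight T c ζ) (hβ : β ≤ ζ) : T.restrictTuple c β ≤ c :=
  fun i => T.restrict_le (c i) ((hc i).symm ▸ hβ)

theorem restrictTuple_restrictTuple (hc : IsTupleOfHeight T c ζ) (h12 : β₁ ≤ β₂) (h2 : β₂ ≤ ζ) :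
    T.restrictTuple (T.restrictTuple c β₂) β₁ = T.restrictTuple c β₁ :=
  funext fun i => T.restrict_restrict (c i) h12 ((hc i).symm ▸ h2)

theorem restrictTuple_mono (hc : IsTupleOfHeight T c ζ) (h12 : β₁ ≤ β₂) (h2 : β₂ ≤ ζ) :
    T.restrictTuple c β₁ ≤ T.restrictTuple c β₂ := fun i =>
  T.restrict_mono (c i) h12 ((hc i).symm ▸ h2)

theorem restrictTuple_strongLT (hc : IsTupleOfHeight T c ζ) (h12 : β₁ < β₂) (h2 : β₂ ≤ ζ) :
    T.restrictTuple c β₁ ≺ T.restrictTuple c β₂ := fun i =>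
  T.restrict_lt_restrict (c i) h12 ((hc i).symm ▸ h2)

theorem restrictTuple_self (hc : IsTupleOfHeight T c ζ) : T.restrictTuple c ζ = c :=
  funext fun i => T.restrict_self (hc i)

theorem restrictTuple_eq_of_le (hbc : b ≤ c) (hb : IsTupleOfHeight T b ζ) :
    T.restrictTuple c ζ = b :=
  funext fun i => T.restrict_eq (hbc i) (hb i)

theorem restrictTuple_eq_restrictTuple_of_le (hbc : b ≤ c) (hb : IsTupleOfHeight T b ζ)
    (hβ : β ≤ ζ) : T.restrictTuple c β = T.restrictTuple b β :=
  funext fun i => T.restrict_eq_restrict_of_le (hbc i) ((hb i).symm ▸ hβ)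

theorem le_restrictTuple (hac : a ≤ c) (ha : IsTupleOfHeight T a ξ) (hc : IsTupleOfHeight T c ζ)
    (h1 : ξ ≤ β) (h2 : β ≤ ζ) : a ≤ T.restrictTuple c β := fun i =>
  T.le_restrict (hac i) ((ha i).symm ▸ h1) ((hc i).symm ▸ h2)

theorem restrictTuple_strongLT_of_not_le (hac : a ≤ c) (ha : IsTupleOfHeight T a ξ)
    (hc : IsTupleOfHeight T c ζ) (hβ : β ≤ ζ) (h : ¬ a ≤ T.restrictTuple c β) :
    T.restrictTuple c β ≺ a := by
  have hβξ : β < ξ := lt_of_not_ge fun hξβ => h (le_restrictTuple hac ha hc hξβ hβ)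
  have hr := isTupleOfHeight_restrictTuple hc hβ
  intro i
  rcases T.le_total_of_le (hac i) (restrictTuple_le hc hβ i) with hle | hle
  · exact absurd (T.height_mono hle) (by rw [ha i, hr i]; exact hβξ.not_ge)
  · exact hle.lt_of_ne fun he => hβξ.ne (by rw [← hr i, he, ha i])

theorem injective_of_le (ha : IsTupleOfHeight T a ξ) (hinj : Injective a) (hac : a ≤ c) :
    Injective c := fun i j hij =>
  hinj (T.eq_of_le_of_le_of_height_eq (hac i) (hij ▸ hac j) (by rw [ha i, ha j]))

theorem not_le_of_strongLT {a c : Fin (m + 1) → α} (h : c ≺ a) : ¬ a ≤ c := fun h' =>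
  (h 0).not_ge (h' 0)

theorem IsTupleOfHeight.height_eq {c : Fin (m + 1) → α} (hζ : IsTupleOfHeight T c ζ)
    (hξ : IsTupleOfHeight T c ξ) : ζ = ξ := (hζ 0).symm.trans (hξ 0)

theorem height_lt_of_strongLT {b c : Fin (m + 1) → α} (hbc : b ≺ c) (hb : IsTupleOfHeight T b ζ)
    (hc : IsTupleOfHeight T c ξ) : ζ < ξ := by
  simpa only [hb 0, hc 0] using T.height_strictMono (hbc 0)

theorem height_le_of_le {b c : Fin (m + 1) → α} (hbc : b ≤ c) (hb : IsTupleOfHeight T b ζ)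
    (hc : IsTupleOfHeight T c ξ) : ζ ≤ ξ := by
  simpa only [hb 0, hc 0] using T.height_mono (hbc 0)

theorem eq_or_strongLT_of_le {b c : Fin (m + 1) → α} (hbc : b ≤ c) (hb : IsTupleOfHeight T b ζ)
    (hc : IsTupleOfHeight T c ξ) : b = c ∨ b ≺ c := by
  rcases (height_le_of_le hbc hb hc).eq_or_lt with rfl | hlt
  · exact Or.inl (by rw [← restrictTuple_eq_of_le hbc hb, restrictTuple_self hc])
  · have h := restrictTuple_strongLT hc hlt le_rfl
    rw [restrictTuple_self hc, restrictTuple_eq_of_le hbc hb] at h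
    exact Or.inr h

end OmegaOneTree

open OmegaOneTree

structure ExtensionProblem.{u} (α : Type) [PartialOrder α] where
  T : OmegaOneTree α
  n : ℕ
  amin : Ordinal.{u} → Fin (n + 1) → α
  I : Set Ordinal.{u}
  γ : Ordinal.{0}
  δ : Ordinal.{0}
  f : Ordinal.{u} → (Fin (n + 1) → α) → ℚ
  Q : Set ℚ
  A : Set Ordinal.{u}
  X : Set α
  amin_spec : ∀ τ ∈ I, ∃ β, IsTupleOfHeight T (amin τ) β ∧ Injective (amin τ)
  γ_lt_δ : γ < δ
  δ_lt_omega1 : δ < omega1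
  I_countable : I.Countable
  f_spec : ∀ τ ∈ I, IsSpecFun T (amin τ) γ (f τ)
  f_suitable : SuitableFamily T amin I γ f
  Q_finite : Q.Finite
  Q_pos : ∀ q ∈ Q, 0 < q
  A_subset : A ⊆ I
  X_height : ∀ x ∈ X, T.height x = δ

namespace ExtensionProblem

variable (S : ExtensionProblem α)

abbrev Tup : Type := Fin (S.n + 1) → α

/-- The tuples at which the extension has to choose new values. -/
def IsKey (τ : Ordinal) (c : S.Tup) : Prop :=
  τ ∈ S.I ∧ S.amin τ ≤ c ∧ ∃ ζ, S.γ < ζ ∧ ζ ≤ S.δ ∧ IsTupleOfHeight S.T c ζ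

def UnderX (c : S.Tup) : Prop := ∃ x : S.Tup, (∀ i, x i ∈ S.X) ∧ c ≤ x

variable {S}

theorem not_isKey_of_height_le {τ : Ordinal} {c : S.Tup} {ζ : Ordinal}
    (hc : IsTupleOfHeight S.T c ζ) (hζ : ζ ≤ S.γ) : ¬ S.IsKey τ c := fun ⟨_, _, _, hγξ, _, hξ⟩ =>
  (hc.height_eq hξ ▸ hζ).not_gt hγξ

theorem f_eq_neg_one {τ : Ordinal} {c : S.Tup} {ζ : Ordinal} (hτ : τ ∈ S.I)
    (hc : IsTupleOfHeight S.T c ζ) (hζ : ζ ≤ S.γ) (h : c ≺ S.amin τ) : S.f τ c = -1 :=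
  (S.f_spec τ hτ).1 c ζ hζ hc h

variable (S) in
/-- A forcing condition. `lt_cap` anticipates the consistency on `X` demanded of the extension. -/
structure Condition where
  dom : Set (Ordinal × S.Tup)
  val : Ordinal × S.Tup → ℚ
  dom_finite : dom.Finite
  isKey : ∀ k ∈ dom, S.IsKey k.1 k.2
  pos : ∀ k ∈ dom, 0 < val k
  f_lt : ∀ k ∈ dom, S.f k.1 (S.T.restrictTuple k.2 S.γ) < val k
  strictMono : ∀ k ∈ dom, ∀ k' ∈ dom, k.1 = k'.1 → k.2 ≺ k'.2 → val k < val k'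
  lt_cap : ∀ k ∈ dom, k.1 ∈ S.A → S.UnderX k.2 → ∀ q ∈ S.Q,
    S.f k.1 (S.T.restrictTuple k.2 S.γ) < q → val k < q

namespace Condition

instance : Preorder S.Condition where
  le p p' := p.dom ⊆ p'.dom ∧ ∀ k ∈ p.dom, p'.val k = p.val k
  le_refl _ := ⟨subset_rfl, fun _ _ => rfl⟩
  le_trans _ _ _ h₁ h₂ := ⟨h₁.1.trans h₂.1, fun k hk => (h₂.2 k (h₁.1 hk)).trans (h₁.2 k hk)⟩

variable (S) in
def empty : S.Condition where
  dom := ∅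
  val _ := 0
  dom_finite := finite_empty
  isKey _ h := h.elim
  pos _ h := h.elim
  f_lt _ h := h.elim
  strictMono _ h := h.elim
  lt_cap _ h := h.elim

open Classical in
def eval (p : S.Condition) (τ : Ordinal) (c : S.Tup) : ℚ :=
  if (τ, c) ∈ p.dom then p.val (τ, c) else if c ≺ S.amin τ then -1 else S.f τ c

/-- `p` has fixed its value at `c` for good. -/
def Decides (p : S.Condition) (τ : Ordinal) (c : S.Tup) : Prop :=
  (τ, c) ∈ p.dom ∨ ¬ S.IsKey τ c

variable {p p' : S.Condition} {τ : Ordinal} {b c d : S.Tup} {ζ ξ β : Ordinal}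

theorem eval_of_mem (h : (τ, c) ∈ p.dom) : p.eval τ c = p.val (τ, c) := by
  rw [eval, if_pos h]

theorem eval_of_strongLT (h : c ≺ S.amin τ) : p.eval τ c = -1 := by
  rw [eval, if_neg fun hk => not_le_of_strongLT h (p.isKey _ hk).2.1, if_pos h]

theorem eval_of_height_le (hτ : τ ∈ S.I) (hc : IsTupleOfHeight S.T c ζ) (hζ : ζ ≤ S.γ) :
    p.eval τ c = S.f τ c := by
  rw [eval, if_neg fun hk => not_isKey_of_height_le hc hζ (p.isKey _ hk)]
  split_ifs with h
  · exact (f_eq_neg_one hτ hc hζ h).symm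
  · rfl

theorem decides_of_height_le (hc : IsTupleOfHeight S.T c ζ) (hζ : ζ ≤ S.γ) : p.Decides τ c :=
  Or.inr (not_isKey_of_height_le hc hζ)

theorem Decides.mono (h : p.Decides τ c) (hle : p ≤ p') : p'.Decides τ c :=
  h.imp_left fun hk => hle.1 hk

theorem Decides.mem_dom (h : p.Decides τ c) (hk : S.IsKey τ c) : (τ, c) ∈ p.dom :=
  h.resolve_right (not_not.mpr hk)

theorem eval_eq_of_le (hle : p ≤ p') (h : p.Decides τ c) : p'.eval τ c = p.eval τ c := by
  rcases h with hk | hk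
  · rw [eval_of_mem (hle.1 hk), eval_of_mem hk, hle.2 _ hk]
  · rw [eval, eval, if_neg fun h => hk (p'.isKey _ h), if_neg fun h => hk (p.isKey _ h)]

theorem height_of_mem {k : Ordinal × S.Tup} (hk : k ∈ p.dom) :
    ∃ ζ, S.γ < ζ ∧ ζ ≤ S.δ ∧ IsTupleOfHeight S.T k.2 ζ := (p.isKey k hk).2.2

theorem val_le_val {k k' : Ordinal × S.Tup} (hk : k ∈ p.dom) (hk' : k' ∈ p.dom) (he : k.1 = k'.1)
    (hle : k.2 ≤ k'.2) : p.val k ≤ p.val k' := by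
  obtain ⟨_, -, -, hζ⟩ := height_of_mem hk
  obtain ⟨_, -, -, hξ⟩ := height_of_mem hk'
  rcases eq_or_strongLT_of_le hle hζ hξ with h | h
  · rw [Prod.ext he h]
  · exact (p.strictMono k hk k' hk' he h).le

theorem val_le_eval_of_le (hb : (τ, b) ∈ p.dom) (hbc : b ≤ c) (hc : IsTupleOfHeight S.T c ζ)
    (hζ : ζ ≤ S.δ) (hd : p.Decides τ c) : p.val (τ, b) ≤ p.eval τ c := by
  obtain ⟨hτ, hab, ξ, hγξ, -, hbξ⟩ := p.isKey _ hb
  have hc' := hd.mem_dom ⟨hτ, hab.trans hbc, ζ, hγξ.trans_le (height_le_of_le hbc hbξ hc), hζ, hc⟩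
  rw [eval_of_mem hc']
  exact val_le_val hb hc' rfl hbc

theorem f_restrictTuple_le_eval (hτ : τ ∈ S.I) (had : S.amin τ ≤ d)
    (hd : IsTupleOfHeight S.T d ζ) (hζ : ζ ≤ S.δ) (hγβ : S.γ ≤ β) (hβ : β ≤ ζ)
    (hdec : p.Decides τ (S.T.restrictTuple d β)) :
    S.f τ (S.T.restrictTuple d S.γ) ≤ p.eval τ (S.T.restrictTuple d β) := by
  obtain ⟨βτ, hτh, -⟩ := S.amin_spec τ hτ
  have hdβ := isTupleOfHeight_restrictTuple hd hβ
  by_cases hab : S.amin τ ≤ S.T.restrictTuple d β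
  · rcases hγβ.eq_or_lt with rfl | hγβ
    · rw [eval_of_height_le hτ hdβ le_rfl]
    · have hk := hdec.mem_dom ⟨hτ, hab, β, hγβ, hβ.trans hζ, hdβ⟩
      have := p.f_lt _ hk
      rw [restrictTuple_restrictTuple hd hγβ.le hβ] at this
      rw [eval_of_mem hk]
      exact this.le
  · have hlt := restrictTuple_strongLT_of_not_le had hτh hd hβ hab
    rw [eval_of_strongLT hlt, f_eq_neg_one hτ (isTupleOfHeight_restrictTuple hd (hγβ.trans hβ))
      le_rfl ((restrictTuple_mono hd hγβ hβ).trans_strongLT hlt)]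

theorem pos_eval (hτ : τ ∈ S.I) (hac : S.amin τ ≤ c) (hc : IsTupleOfHeight S.T c ζ)
    (hζ : ζ ≤ S.δ) (hd : p.Decides τ c) : 0 < p.eval τ c := by
  by_cases hζγ : ζ ≤ S.γ
  · rw [eval_of_height_le hτ hc hζγ]
    exact (S.f_spec τ hτ).2.1 c ζ hζγ hc hac
  · have hk := hd.mem_dom ⟨hτ, hac, ζ, lt_of_not_ge hζγ, hζ, hc⟩
    rw [eval_of_mem hk]
    exact p.pos _ hk

theorem eval_lt_eval (hτ : τ ∈ S.I) (hab : S.amin τ ≤ b) (hbc : b ≺ c)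
    (hb : IsTupleOfHeight S.T b ζ) (hc : IsTupleOfHeight S.T c ξ) (hξ : ξ ≤ S.δ)
    (hdb : p.Decides τ b) (hdc : p.Decides τ c) : p.eval τ b < p.eval τ c := by
  have hζξ := height_lt_of_strongLT hbc hb hc
  have hac := hab.trans (le_of_strongLT hbc)
  by_cases hξγ : ξ ≤ S.γ
  · rw [eval_of_height_le hτ hb (hζξ.le.trans hξγ), eval_of_height_le hτ hc hξγ]
    exact (S.f_spec τ hτ).2.2 b c ζ ξ (hζξ.le.trans hξγ) hξγ hb hc hab hac hbc
  have hkc := hdc.mem_dom ⟨hτ, hac, ξ, lt_of_not_ge hξγ, hξ, hc⟩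
  rw [eval_of_mem hkc]
  by_cases hζγ : ζ ≤ S.γ
  · rw [eval_of_height_le hτ hb hζγ]
    refine lt_of_le_of_lt ?_ (p.f_lt _ hkc)
    have hcb := restrictTuple_eq_of_le (le_of_strongLT hbc) hb
    rcases hζγ.eq_or_lt with rfl | hζγ
    · rw [hcb]
    · have hγ := isTupleOfHeight_restrictTuple hc (lt_of_not_ge hξγ).le
      have hbγ : b ≺ S.T.restrictTuple c S.γ :=
        hcb ▸ restrictTuple_strongLT hc hζγ (lt_of_not_ge hξγ).le
      exact ((S.f_spec τ hτ).2.2 b _ ζ S.γ hζγ.le le_rfl hb hγ hab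
        (hab.trans (le_of_strongLT hbγ)) hbγ).le
  · have hkb := hdb.mem_dom ⟨hτ, hab, ζ, lt_of_not_ge hζγ, hζξ.le.trans hξ, hb⟩
    rw [eval_of_mem hkb]
    exact p.strictMono _ hkb _ hkc rfl hbc

end Condition

end ExtensionProblem

namespace ExtensionProblem

namespace Condition

variable {S : ExtensionProblem α} {p p' : S.Condition}

def Admits (p : S.Condition) (k : Ordinal × S.Tup) (U : Set ℚ) : Prop :=
  S.IsKey k.1 k.2 ∧ k ∉ p.dom ∧ U.Finite ∧ ∀ u ∈ U, 0 < u ∧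
    S.f k.1 (S.T.restrictTuple k.2 S.γ) < u ∧
    ∀ k' ∈ p.dom, k'.1 = k.1 → k'.2 ≺ k.2 → p.val k' < u

/-- The constraints on a new value at `(τ, c)` form finitely many lower bounds below finitely many
upper bounds; the caps of the keys of `p` below `c` are caps of `c`. -/
theorem Admits.exists_value {τ : Ordinal} {c : S.Tup} {U : Set ℚ} (h : p.Admits (τ, c) U) :
    ∃ v : ℚ, (0 < v ∧ S.f τ (S.T.restrictTuple c S.γ) < v ∧
      ∀ k ∈ p.dom, k.1 = τ → k.2 ≺ c → p.val k < v) ∧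
      (∀ u ∈ U, v < u) ∧ (∀ k ∈ p.dom, k.1 = τ → c ≺ k.2 → v < p.val k) ∧
      (τ ∈ S.A → S.UnderX c → ∀ q ∈ S.Q, S.f τ (S.T.restrictTuple c S.γ) < q → v < q) := by
  obtain ⟨⟨-, -, ζ, hγζ, -, hc⟩, -, hU, hUb⟩ := h
  set fγ := S.f τ (S.T.restrictTuple c S.γ)
  have hdomf : ∀ P : Ordinal × S.Tup → Prop, {k ∈ p.dom | P k}.Finite := fun _ =>
    p.dom_finite.subset (sep_subset _ _)
  have hfγ : ∀ k ∈ p.dom, k.2 ≤ c ∨ c ≤ k.2 → S.f τ (S.T.restrictTuple k.2 S.γ) = fγ := by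
    rintro ⟨τ', c'⟩ hk (hle | hle)
    · obtain ⟨ξ, hγξ, -, hξ⟩ := height_of_mem hk
      rw [← restrictTuple_eq_restrictTuple_of_le hle hξ hγξ.le]
    · rw [restrictTuple_eq_restrictTuple_of_le hle hc hγζ.le]
  set lower : Set ℚ := insert 0 (insert fγ (p.val '' {k ∈ p.dom | k.1 = τ ∧ k.2 ≺ c}))
  set upper : Set ℚ := U ∪ p.val '' {k ∈ p.dom | k.1 = τ ∧ c ≺ k.2} ∪
    {q ∈ S.Q | τ ∈ S.A ∧ S.UnderX c ∧ fγ < q}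
  have hlu : ∀ x ∈ lower, ∀ y ∈ upper, x < y := by
    rintro x hx y ((hy | ⟨k'', ⟨hk'', he'', hck''⟩, rfl⟩) | ⟨hyQ, hτA, ⟨z, hzX, hcz⟩, hfy⟩) <;>
      rcases hx with rfl | rfl | ⟨k', ⟨hk', he, hk'c⟩, rfl⟩
    · exact (hUb y hy).1
    · exact (hUb y hy).2.1
    · exact (hUb y hy).2.2 k' hk' he hk'c
    · exact p.pos _ hk''
    · have h := p.f_lt _ hk''
      rwa [he'', hfγ _ hk'' (Or.inr (le_of_strongLT hck''))] at h
    · exact p.strictMono _ hk' _ hk'' (he.trans he''.symm) fun i => (hk'c i).trans (hck'' i)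
    · exact S.Q_pos y hyQ
    · exact hfy
    · refine p.lt_cap k' hk' (he ▸ hτA) ⟨z, hzX, (le_of_strongLT hk'c).trans hcz⟩ y hyQ ?_
      rwa [he, hfγ k' hk' (Or.inl (le_of_strongLT hk'c))]
  obtain ⟨v, hvl, hvu⟩ := ((((hdomf _).image _).insert _).insert _).exists_between'
    ((hU.union ((hdomf _).image _)).union (S.Q_finite.subset (sep_subset _ _))) hlu
  exact ⟨v, ⟨hvl 0 (mem_insert _ _), hvl _ (mem_insert_of_mem _ (mem_insert _ _)),
    fun k hk he hlt => hvl _ (mem_insert_of_mem _ (mem_insert_of_mem _ ⟨k, ⟨hk, he, hlt⟩, rfl⟩))⟩,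
    fun u hu => hvu u (Or.inl (Or.inl hu)),
    fun k hk he hlt => hvu _ (Or.inl (Or.inr ⟨k, ⟨hk, he, hlt⟩, rfl⟩)),
    fun hτA hcX q hq hfq => hvu q (Or.inr ⟨hq, hτA, hcX, hfq⟩)⟩

theorem exists_le_insert {k : Ordinal × S.Tup} {U : Set ℚ} (h : p.Admits k U) :
    ∃ p', p ≤ p' ∧ p'.dom = insert k p.dom ∧ ∀ u ∈ U, p'.val k < u := by
  classical
  obtain ⟨τ, c⟩ := k
  obtain ⟨v, ⟨hv0, hvf, hvbelow⟩, hvU, hvabove, hvcap⟩ := h.exists_value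
  obtain ⟨hkey, hkp, -⟩ := h
  have hval : ∀ k ∈ p.dom, update p.val (τ, c) v k = p.val k := fun k hk =>
    update_of_ne (ne_of_mem_of_not_mem hk hkp) _ _
  refine ⟨⟨insert (τ, c) p.dom, update p.val (τ, c) v, p.dom_finite.insert _, ?_, ?_, ?_, ?_, ?_⟩,
    ⟨subset_insert _ _, hval⟩, rfl, fun u hu => ?_⟩
  · rintro k (rfl | hk)
    exacts [hkey, p.isKey k hk]
  · rintro k (rfl | hk)
    · rwa [update_self]
    · rw [hval k hk]; exact p.pos k hk
  · rintro k (rfl | hk)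
    · rwa [update_self]
    · rw [hval k hk]; exact p.f_lt k hk
  · rintro k (rfl | hk) k' (rfl | hk') he hlt
    · exact absurd (hlt 0) (lt_irrefl _)
    · rw [update_self, hval k' hk']
      exact hvabove k' hk' he.symm hlt
    · rw [update_self, hval k hk]
      exact hvbelow k hk he hlt
    · rw [hval k hk, hval k' hk']
      exact p.strictMono k hk k' hk' he hlt
  · rintro k (rfl | hk) hτA hcX q hq hfq
    · rw [update_self]; exact hvcap hτA hcX q hq hfq
    · rw [hval k hk]; exact p.lt_cap k hk hτA hcX q hq hfq
  · show update p.val (τ, c) v (τ, c) < u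
    rw [update_self]
    exact hvU u hu

theorem Admits.of_le_insert {k k₀ : Ordinal × S.Tup} {U : Set ℚ} (h : p.Admits k U) (hle : p ≤ p')
    (hdom : p'.dom = insert k₀ p.dom) (hne : k₀ ≠ k) (hk₀ : ¬ k₀.2 ≺ k.2) : p'.Admits k U := by
  obtain ⟨hkey, hkp, hU, hUb⟩ := h
  refine ⟨hkey, ?_, hU, fun u hu => ⟨(hUb u hu).1, (hUb u hu).2.1, fun k' hk' he hlt => ?_⟩⟩
  · rw [hdom]
    rintro (h | h)
    exacts [hne h.symm, hkp h]
  · rw [hdom] at hk'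
    rcases hk' with rfl | hk'
    · exact absurd hlt hk₀
    · rw [hle.2 k' hk']
      exact (hUb u hu).2.2 k' hk' he hlt

theorem exists_le_union {K : Set (Ordinal × S.Tup)} (hK : K.Finite)
    (hinc : ∀ k ∈ K, ∀ k' ∈ K, ¬ k.2 ≺ k'.2) (U : Ordinal × S.Tup → Set ℚ)
    (hadm : ∀ k ∈ K, p.Admits k (U k)) :
    ∃ p', p ≤ p' ∧ p'.dom = p.dom ∪ K ∧ ∀ k ∈ K, ∀ u ∈ U k, p'.val k < u := by
  induction K, hK using Set.Finite.induction_on generalizing p with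
  | empty => exact ⟨p, le_rfl, (union_empty _).symm, fun _ h => h.elim⟩
  | @insert k₀ K hk₀K _ ih =>
    obtain ⟨p₁, hp₁, hdom₁, hval₁⟩ := exists_le_insert (hadm k₀ (mem_insert _ _))
    have hadm₁ : ∀ k ∈ K, p₁.Admits k (U k) := fun k hk =>
      (hadm k (mem_insert_of_mem _ hk)).of_le_insert hp₁ hdom₁ (ne_of_mem_of_not_mem hk hk₀K).symm
        (hinc k₀ (mem_insert _ _) k (mem_insert_of_mem _ hk))
    obtain ⟨p₂, hp₂, hdom₂, hval₂⟩ := ih (fun k hk k' hk' =>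
      hinc k (mem_insert_of_mem _ hk) k' (mem_insert_of_mem _ hk')) hadm₁
    refine ⟨p₂, hp₁.trans hp₂, by rw [hdom₂, hdom₁, insert_union, union_insert], ?_⟩
    rintro k (rfl | hk) u hu
    · rw [hp₂.2 k (hdom₁ ▸ mem_insert _ _)]
      exact hval₁ u hu
    · exact hval₂ k hk u hu

theorem exists_le_superset {K : Set (Ordinal × S.Tup)} (hK : K.Finite)
    (hkey : ∀ k ∈ K, S.IsKey k.1 k.2) (hinc : ∀ k ∈ K, ∀ k' ∈ K, ¬ k.2 ≺ k'.2) :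
    ∃ p', p ≤ p' ∧ K ⊆ p'.dom := by
  obtain ⟨p', hle, hdom, -⟩ := exists_le_union (hK.sdiff (t := p.dom))
    (fun k hk k' hk' => hinc k hk.1 k' hk'.1) (fun _ => ∅)
    fun k hk => ⟨hkey k hk.1, hk.2, finite_empty, fun _ h => h.elim⟩
  refine ⟨p', hle, fun k hk => ?_⟩
  rw [hdom]
  by_cases hkp : k ∈ p.dom
  exacts [Or.inl hkp, Or.inr ⟨hk, hkp⟩]

end Condition

end ExtensionProblem

namespace ExtensionProblem

variable (S : ExtensionProblem.{u} α)

/-- An instance of the requirement in `SuitableFamily`. -/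
structure Challenge where
  lo : Ordinal.{0}
  hi : Ordinal.{0}
  B : Set Ordinal.{u}
  R : Set ℚ
  t : Set α
  l : ℕ
  a : Fin l → α
  idx : Fin S.n → Fin l
  c : Fin S.n → α

variable {S}

structure Challenge.IsValid (ch : S.Challenge) : Prop where
  lo_lt_hi : ch.lo < ch.hi
  hi_le_δ : ch.hi ≤ S.δ
  B_finite : ch.B.Finite
  B_subset : ch.B ⊆ S.I
  R_finite : ch.R.Finite
  R_pos : ∀ q ∈ ch.R, 0 < q
  t_finite : ch.t.Finite
  t_height : ∀ x ∈ ch.t, S.T.height x = ch.hi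
  n_le_l : S.n ≤ ch.l
  a_injective : Injective ch.a
  a_height : ∀ i, S.T.height (ch.a i) = ch.lo
  idx_injective : Injective ch.idx
  c_spec : ∀ k, S.T.height (ch.c k) = ch.hi ∧ ch.c k ∉ ch.t ∧ ch.a (ch.idx k) < ch.c k

namespace Condition

variable {p p₁ : S.Condition} {ch : S.Challenge}

def Answers (p : S.Condition) (ch : S.Challenge) : Prop :=
  ∃ b : Fin ch.l → α, (∀ i, S.T.height (b i) = ch.hi ∧ b i ∉ ch.t ∧ ch.a i < b i) ∧
    (∀ k, b (ch.idx k) = ch.c k) ∧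
    ∀ τ ∈ ch.B, ∀ d : S.Tup, (∀ i, d i ∈ range b) → S.amin τ ≤ d →
      p.Decides τ d ∧ p.Decides τ (S.T.restrictTuple d ch.lo) ∧
      ∀ q ∈ ch.R, p.eval τ (S.T.restrictTuple d ch.lo) < q → p.eval τ d < q

theorem answers_of_hi_le (hch : ch.IsValid) (hhi : ch.hi ≤ S.γ) : p.Answers ch := by
  obtain ⟨b, hb, hbidx, hcons⟩ := S.f_suitable ch.lo ch.hi hch.lo_lt_hi hhi ch.B hch.B_finite
    hch.B_subset ch.R hch.R_finite hch.R_pos ch.t hch.t_finite hch.t_height ch.l hch.n_le_l ch.a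
    hch.a_injective hch.a_height ch.idx hch.idx_injective ch.c hch.c_spec
  refine ⟨b, hb, hbidx, fun τ hτ d hdb had => ?_⟩
  have hd : IsTupleOfHeight S.T d ch.hi := fun i => by
    obtain ⟨j, hj⟩ := hdb i
    exact hj ▸ (hb j).1
  have hdlo := isTupleOfHeight_restrictTuple hd hch.lo_lt_hi.le
  have hlo := hch.lo_lt_hi.le.trans hhi
  refine ⟨decides_of_height_le hd hhi, decides_of_height_le hdlo hlo, fun q hq hlt => ?_⟩
  rw [eval_of_height_le (hch.B_subset hτ) hdlo hlo] at hlt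
  rw [eval_of_height_le (hch.B_subset hτ) hd hhi]
  exact hcons τ hτ q hq d hdb had hlt

/-- `bb` is the projection to level `max lo γ` of an answer to `ch` still to be built, along
which `p` has already decided the values at level `lo`. -/
def Prepares (p : S.Condition) (ch : S.Challenge) (bb : Fin ch.l → α) : Prop :=
  (∀ i, S.T.height (bb i) = max ch.lo S.γ ∧ ch.a i ≤ bb i) ∧
    (∀ k, S.T.restrict (ch.c k) (max ch.lo S.γ) = bb (ch.idx k)) ∧
    ∀ τ ∈ ch.B, ∀ (d : S.Tup) (ζ : Ordinal), IsTupleOfHeight S.T d ζ → max ch.lo S.γ ≤ ζ →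
      ζ ≤ S.δ → S.amin τ ≤ d → (∀ i, S.T.restrict (d i) (max ch.lo S.γ) ∈ range bb) →
      p.Decides τ (S.T.restrictTuple d ch.lo) ∧
      ∀ q ∈ ch.R, p.eval τ (S.T.restrictTuple d ch.lo) < q → S.f τ (S.T.restrictTuple d S.γ) < q

/-- The suitability of `f` between the levels `lo` and `γ` provides `bb`. -/
theorem exists_prepares_of_lo_lt (hch : ch.IsValid) (hlo : ch.lo < S.γ) (hγhi : S.γ < ch.hi) :
    ∃ bb, p.Prepares ch bb := by
  have hμ : max ch.lo S.γ = S.γ := max_eq_right hlo.le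
  have hcγ : ∀ k, S.T.height (S.T.restrict (ch.c k) S.γ) = S.γ ∧
      S.T.restrict (ch.c k) S.γ ∉ (∅ : Set α) ∧ ch.a (ch.idx k) < S.T.restrict (ch.c k) S.γ := by
    intro k
    obtain ⟨hck, -, hack⟩ := hch.c_spec k
    refine ⟨S.T.height_restrict _ (hck ▸ hγhi.le), notMem_empty _, ?_⟩
    rw [← S.T.restrict_eq hack.le (hch.a_height _)]
    exact S.T.restrict_lt_restrict _ hlo (hck ▸ hγhi.le)
  obtain ⟨bb, hbb, hbbidx, hcons⟩ := S.f_suitable ch.lo S.γ hlo le_rfl ch.B hch.B_finite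
    hch.B_subset ch.R hch.R_finite hch.R_pos ∅ finite_empty (fun _ h => h.elim) ch.l hch.n_le_l
    ch.a hch.a_injective hch.a_height ch.idx hch.idx_injective _ hcγ
  refine ⟨bb, ?_⟩
  unfold Prepares
  rw [hμ]
  refine ⟨fun i => ⟨(hbb i).1, (hbb i).2.2.le⟩, fun k => (hbbidx k).symm,
    fun τ hτ d ζ hd hζ _ had hdbb => ?_⟩
  have hτI := hch.B_subset hτ
  have hdγ := isTupleOfHeight_restrictTuple hd hζ
  have hdlo := isTupleOfHeight_restrictTuple hd (hlo.le.trans hζ)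
  refine ⟨decides_of_height_le hdlo hlo.le, fun q hq hlt => ?_⟩
  rw [eval_of_height_le hτI hdlo hlo.le] at hlt
  by_cases habγ : S.amin τ ≤ S.T.restrictTuple d S.γ
  · refine hcons τ hτ q hq _ hdbb habγ ?_
    show S.f τ (S.T.restrictTuple (S.T.restrictTuple d S.γ) ch.lo) < q
    rwa [restrictTuple_restrictTuple hd hlo.le hζ]
  · obtain ⟨βτ, hτh, -⟩ := S.amin_spec τ hτI
    have hγlt := restrictTuple_strongLT_of_not_le had hτh hd hζ habγ
    have hlolt := (restrictTuple_mono hd hlo.le hζ).trans_strongLT hγlt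
    rwa [f_eq_neg_one hτI hdγ le_rfl hγlt, ← f_eq_neg_one hτI hdlo hlo.le hlolt]

theorem exists_prepares_of_le_lo (hch : ch.IsValid) (hlo : S.γ ≤ ch.lo) :
    ∃ p₁, p ≤ p₁ ∧ p₁.Prepares ch ch.a := by
  have hμ : max ch.lo S.γ = ch.lo := max_eq_left hlo
  set K := {k : Ordinal × S.Tup | k.1 ∈ ch.B ∧ (∀ i, k.2 i ∈ range ch.a) ∧ S.IsKey k.1 k.2}
  have hKfin : K.Finite := (hch.B_finite.prod (Set.Finite.pi' fun _ => finite_range ch.a)).subset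
    fun k hk => ⟨hk.1, hk.2.1⟩
  have hKh : ∀ k ∈ K, IsTupleOfHeight S.T k.2 ch.lo := fun k hk i => by
    obtain ⟨j, hj⟩ := hk.2.1 i
    exact hj ▸ hch.a_height j
  obtain ⟨p₁, hp₁, hK⟩ := exists_le_superset (p := p) hKfin (fun k hk => hk.2.2)
    fun k hk k' hk' hlt => (height_lt_of_strongLT hlt (hKh k hk) (hKh k' hk')).false
  refine ⟨p₁, hp₁, ?_⟩
  unfold Prepares
  rw [hμ]
  refine ⟨fun i => ⟨hch.a_height i, le_rfl⟩,
    fun k => S.T.restrict_eq (hch.c_spec k).2.2.le (hch.a_height _),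
    fun τ hτ d ζ hd hζ hζδ had hda => ?_⟩
  have hdec : p₁.Decides τ (S.T.restrictTuple d ch.lo) := by
    by_cases hkey : S.IsKey τ (S.T.restrictTuple d ch.lo)
    exacts [Or.inl (hK ⟨hτ, hda, hkey⟩), Or.inr hkey]
  exact ⟨hdec, fun q _ hlt => (f_restrictTuple_le_eval (hch.B_subset hτ) had hd hζδ hlo hζ
    hdec).trans_lt hlt⟩

/-- By the choice of the free entries of `b`, a key of `p₁` below `(τ, d)` has height at most
`max lo γ`, hence lies below `d↾lo`. -/
theorem admits_of_prepares (hch : ch.IsValid) (hγhi : S.γ < ch.hi) {bb : Fin ch.l → α}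
    (hprep : p₁.Prepares ch bb) {b : Fin ch.l → α}
    (hb : ∀ i, S.T.height (b i) = ch.hi ∧ bb i < b i)
    (hfree : ∀ j ∉ range ch.idx, ∀ x ∈ ⋃ k ∈ p₁.dom, range k.2,
      max ch.lo S.γ < S.T.height x → ¬ x ≤ b j)
    {τ : Ordinal} (hτ : τ ∈ ch.B) {d : S.Tup} (hdb : ∀ i, d i ∈ range b) (had : S.amin τ ≤ d) :
    p₁.Admits (τ, d) {q ∈ ch.R | p₁.eval τ (S.T.restrictTuple d ch.lo) < q} := by
  obtain ⟨hbb, -, hbase⟩ := hprep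
  set μ := max ch.lo S.γ
  have hμhi : μ < ch.hi := max_lt hch.lo_lt_hi hγhi
  have hτI := hch.B_subset hτ
  have hd : IsTupleOfHeight S.T d ch.hi := fun i => by
    obtain ⟨j, hj⟩ := hdb i
    exact hj ▸ (hb j).1
  have hdbb : ∀ i, S.T.restrict (d i) μ ∈ range bb := fun i => by
    obtain ⟨j, hj⟩ := hdb i
    exact ⟨j, hj ▸ (S.T.restrict_eq (hb j).2.le (hbb j).1).symm⟩
  obtain ⟨βτ, hτh, hτinj⟩ := S.amin_spec τ hτI
  obtain ⟨j, hj, i₀, hi₀⟩ := exists_notMem_range_of_injective b ch.idx d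
    (injective_of_le hτh hτinj had) hdb
  have hlow : ∀ k ∈ p₁.dom, ∀ ξ, IsTupleOfHeight S.T k.2 ξ → k.2 ≤ d → ξ ≤ μ :=
    fun k hk ξ hξ hkd => le_of_not_gt fun hμξ => hfree j hj (k.2 i₀)
      (mem_biUnion hk (mem_range_self i₀)) (hξ i₀ ▸ hμξ) (hi₀ ▸ hkd i₀)
  obtain ⟨hdec, hγ⟩ := hbase τ hτ d ch.hi hd hμhi.le hch.hi_le_δ had hdbb
  refine ⟨⟨hτI, had, ch.hi, hγhi, hch.hi_le_δ, hd⟩, fun hk => (hlow _ hk _ hd le_rfl).not_gt hμhi,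
    hch.R_finite.subset (sep_subset _ _), fun u ⟨hu, hlt⟩ => ⟨hch.R_pos u hu, hγ u hu hlt,
    fun k hk he hkd => ?_⟩⟩
  obtain ⟨ξ, hγξ, -, hξ⟩ := height_of_mem hk
  have hξlo : ξ ≤ ch.lo :=
    (le_max_iff.mp (hlow k hk ξ hξ (le_of_strongLT hkd))).resolve_right hγξ.not_ge
  have hkdlo : k.2 ≤ S.T.restrictTuple d ch.lo := by
    rw [← restrictTuple_eq_of_le (le_of_strongLT hkd) hξ]
    exact restrictTuple_mono hd hξlo hch.lo_lt_hi.le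
  obtain ⟨τ', c'⟩ := k
  obtain rfl : τ' = τ := he
  exact (val_le_eval_of_le hk hkdlo (isTupleOfHeight_restrictTuple hd hch.lo_lt_hi.le)
    (hch.lo_lt_hi.le.trans hch.hi_le_δ) hdec).trans_lt hlt

theorem exists_le_prepares (hch : ch.IsValid) (hγhi : S.γ < ch.hi) (p : S.Condition) :
    ∃ bb p₁, p ≤ p₁ ∧ p₁.Prepares ch bb := by
  rcases lt_or_ge ch.lo S.γ with hlo | hlo
  · obtain ⟨bb, hbb⟩ := exists_prepares_of_lo_lt (p := p) hch hlo hγhi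
    exact ⟨bb, p, le_rfl, hbb⟩
  · obtain ⟨p₁, hp₁, hprep⟩ := exists_prepares_of_le_lo (p := p) hch hlo
    exact ⟨_, p₁, hp₁, hprep⟩

theorem exists_le_answers_of_lt_hi (hch : ch.IsValid) (hγhi : S.γ < ch.hi) (p : S.Condition) :
    ∃ p', p ≤ p' ∧ p'.Answers ch := by
  obtain ⟨bb, p₁, hp₁, hprep⟩ := exists_le_prepares hch hγhi p
  have hμhi : max ch.lo S.γ < ch.hi := max_lt hch.lo_lt_hi hγhi
  obtain ⟨b, hb, hbidx, hfree⟩ := S.T.exists_extend_avoiding hμhi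
    (hch.hi_le_δ.trans_lt S.δ_lt_omega1) (p₁.dom_finite.biUnion fun k _ => finite_range k.2)
    hch.t_finite bb (fun i => (hprep.1 i).1) hch.idx_injective ch.c fun k =>
      ⟨(hch.c_spec k).1, (hch.c_spec k).2.1, hprep.2.1 k ▸
        S.T.restrict_lt_self ((hch.c_spec k).1 ▸ hμhi)⟩
  set K := {k : Ordinal × S.Tup | k.1 ∈ ch.B ∧ (∀ i, k.2 i ∈ range b) ∧ S.amin k.1 ≤ k.2}
  have hKfin : K.Finite := (hch.B_finite.prod (Set.Finite.pi' fun _ => finite_range b)).subset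
    fun k hk => ⟨hk.1, hk.2.1⟩
  have hKh : ∀ k ∈ K, IsTupleOfHeight S.T k.2 ch.hi := fun k hk i => by
    obtain ⟨j, hj⟩ := hk.2.1 i
    exact hj ▸ (hb j).1
  obtain ⟨p₂, hp₂, hdom₂, hval₂⟩ := exists_le_union hKfin
    (fun k hk k' hk' hlt => (height_lt_of_strongLT hlt (hKh k hk) (hKh k' hk')).false)
    (fun k => {q ∈ ch.R | p₁.eval k.1 (S.T.restrictTuple k.2 ch.lo) < q})
    fun k hk => admits_of_prepares hch hγhi hprep (fun i => ⟨(hb i).1, (hb i).2.2⟩) hfree hk.1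
      hk.2.1 hk.2.2
  refine ⟨p₂, hp₁.trans hp₂, b, fun i => ⟨(hb i).1, (hb i).2.1, (hprep.1 i).2.trans_lt (hb i).2.2⟩,
    hbidx, fun τ hτ d hdb had => ?_⟩
  have hk : (τ, d) ∈ p₂.dom := hdom₂ ▸ Or.inr ⟨hτ, hdb, had⟩
  have hdlo := (hprep.2.2 τ hτ d ch.hi (hKh (τ, d) ⟨hτ, hdb, had⟩) hμhi.le hch.hi_le_δ had
    fun i => by
      obtain ⟨j, hj⟩ := hdb i
      exact ⟨j, hj ▸ (S.T.restrict_eq (hb j).2.2.le (hprep.1 j).1).symm⟩).1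
  refine ⟨Or.inl hk, hdlo.mono hp₂, fun q hq hlt => ?_⟩
  rw [eval_eq_of_le hp₂ hdlo] at hlt
  rw [eval_of_mem hk]
  exact hval₂ (τ, d) ⟨hτ, hdb, had⟩ q ⟨hq, hlt⟩

theorem exists_le_answers (hch : ch.IsValid) (p : S.Condition) : ∃ p', p ≤ p' ∧ p'.Answers ch := by
  rcases le_or_gt ch.hi S.γ with hhi | hhi
  exacts [⟨p, le_rfl, answers_of_hi_le hch hhi⟩, exists_le_answers_of_lt_hi hch hhi p]

end Condition

end ExtensionProblem

namespace ExtensionProblem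

variable {S : ExtensionProblem.{u} α}

theorem countable_setOf_height_le : {x : α | S.T.height x ≤ S.δ}.Countable := by
  have h : {x : α | S.T.height x ≤ S.δ} = ⋃ β ∈ Iic S.δ, {x | S.T.height x = β} := by
    ext x
    simp
  rw [h]
  exact (countable_Iic_of_lt_omega1 S.δ_lt_omega1).biUnion fun β _ => S.T.level_countable β

theorem countable_setOf_isKey : {k : Ordinal × S.Tup | S.IsKey k.1 k.2}.Countable :=
  (S.I_countable.prod (countable_pi fun _ => countable_setOf_height_le)).mono
    fun k ⟨hτ, _, _, _, hζ, hc⟩ => show k.1 ∈ S.I ∧ ∀ i, S.T.height (k.2 i) ≤ S.δ from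
      ⟨hτ, fun i => (hc i).symm ▸ hζ⟩

/-- Every valid challenge is coded by finitely many elements of countable sets. -/
theorem countable_setOf_isValid : {ch : S.Challenge | ch.IsValid}.Countable := by
  classical
  have : Countable {x : α // S.T.height x ≤ S.δ} := countable_setOf_height_le.to_subtype
  have : Countable (Iic S.δ) := (countable_Iic_of_lt_omega1 S.δ_lt_omega1).to_subtype
  have : Countable S.I := S.I_countable.to_subtype
  let decode : Iic S.δ × Iic S.δ × Finset S.I × Finset ℚ × Finset {x : α // S.T.height x ≤ S.δ} ×
      (Σ l, (Fin l → {x : α // S.T.height x ≤ S.δ}) × (Fin S.n → Fin l) ×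
        (Fin S.n → {x : α // S.T.height x ≤ S.δ})) → S.Challenge :=
    fun ⟨lo, hi, B, R, t, l, a, idx, c⟩ =>
      (⟨lo, hi, (↑) '' (B : Set S.I), R, (↑) '' (t : Set {x : α // S.T.height x ≤ S.δ}), l,
        (↑) ∘ a, idx, (↑) ∘ c⟩ : S.Challenge)
  refine (countable_range decode).mono fun ch hch => ?_
  have hlo : ch.lo ≤ S.δ := hch.lo_lt_hi.le.trans hch.hi_le_δ
  refine ⟨(⟨ch.lo, hlo⟩, ⟨ch.hi, hch.hi_le_δ⟩, hch.B_finite.toFinset.subtype (· ∈ S.I),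
    hch.R_finite.toFinset, hch.t_finite.toFinset.subtype (S.T.height · ≤ S.δ),
    ⟨ch.l, fun i => ⟨ch.a i, (hch.a_height i).trans_le hlo⟩, ch.idx,
      fun k => ⟨ch.c k, (hch.c_spec k).1.trans_le hch.hi_le_δ⟩⟩), ?_⟩
  obtain ⟨lo, hi, B, R, t, l, a, idx, c⟩ := ch
  simp only [decode, Challenge.mk.injEq, true_and, heq_eq_eq]
  refine ⟨?_, Finite.coe_toFinset _, ?_, rfl, rfl⟩
  · ext τ
    simpa using fun h => hch.B_subset h
  · ext x
    simpa using fun h => (hch.t_height x h).trans_le hch.hi_le_δ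

variable (S) in
abbrev Task := ↥{k : Ordinal × S.Tup | S.IsKey k.1 k.2} ⊕ ↥{ch : S.Challenge | ch.IsValid}

instance : Countable S.Task := by
  have := (countable_setOf_isKey (S := S)).to_subtype
  have := (countable_setOf_isValid (S := S)).to_subtype
  infer_instance

variable (S) in
def taskSet : S.Task → Set S.Condition
  | .inl k => {p | k.1 ∈ p.dom}
  | .inr ch => {p | p.Answers ch.1}

theorem isCofinal_taskSet : ∀ i, IsCofinal (S.taskSet i)
  | .inl ⟨k, hk⟩ => fun p =>
    let ⟨p', hle, hsub⟩ := p.exists_le_superset (finite_singleton k)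
      (fun _ h => h ▸ hk) fun _ h _ h' hlt => by subst h h'; exact (hlt 0).false
    ⟨p', hsub rfl, hle⟩
  | .inr ⟨_, hch⟩ => fun p =>
    let ⟨p', hle, hans⟩ := Condition.exists_le_answers hch p
    ⟨p', hans, hle⟩

variable (S) in
/-- A sequence meeting every task, by the Rasiowa–Sikorski lemma. -/
def generic : ℕ → S.Condition :=
  letI := Encodable.ofCountable S.Task
  Order.sequenceOfCofinals (Condition.empty S) fun i => ⟨S.taskSet i, isCofinal_taskSet i⟩

theorem generic_monotone : Monotone S.generic :=
  letI := Encodable.ofCountable S.Task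
  Order.sequenceOfCofinals.monotone _ _

theorem exists_generic_mem (i : S.Task) : ∃ k, S.generic k ∈ S.taskSet i :=
  letI := Encodable.ofCountable S.Task
  ⟨_, Order.sequenceOfCofinals.encode_mem (Condition.empty S)
    (fun i => ⟨S.taskSet i, isCofinal_taskSet i⟩) i⟩

theorem exists_generic_decides (τ : Ordinal) (c : S.Tup) : ∃ k, (S.generic k).Decides τ c := by
  by_cases hk : S.IsKey τ c
  · obtain ⟨k, hk'⟩ := exists_generic_mem (.inl ⟨(τ, c), hk⟩)
    exact ⟨k, Or.inl hk'⟩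
  · exact ⟨0, Or.inr hk⟩

variable (S) in
def limit (τ : Ordinal) (c : S.Tup) : ℚ :=
  (S.generic (exists_generic_decides τ c).choose).eval τ c

theorem limit_eq_eval {τ : Ordinal} {c : S.Tup} {k : ℕ} (h : (S.generic k).Decides τ c) :
    S.limit τ c = (S.generic k).eval τ c := by
  have hm := (exists_generic_decides τ c).choose_spec
  rw [limit, ← Condition.eval_eq_of_le (generic_monotone (le_max_left _ k)) hm,
    Condition.eval_eq_of_le (generic_monotone (le_max_right _ k)) h]

theorem limit_of_height_le {τ : Ordinal} {c : S.Tup} {ζ : Ordinal} (hτ : τ ∈ S.I)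
    (hc : IsTupleOfHeight S.T c ζ) (hζ : ζ ≤ S.γ) : S.limit τ c = S.f τ c := by
  rw [limit_eq_eval (k := 0) (Condition.decides_of_height_le hc hζ),
    Condition.eval_of_height_le hτ hc hζ]

theorem isSpecFun_limit {τ : Ordinal} (hτ : τ ∈ S.I) :
    IsSpecFun S.T (S.amin τ) S.δ (S.limit τ) := by
  refine ⟨fun c _ _ _ hlt => ?_, fun c ζ hζ hc hac => ?_, fun b c ζ ξ _ hξ hb hc hab _ hbc => ?_⟩
  · obtain ⟨k, hk⟩ := exists_generic_decides τ c
    rw [limit_eq_eval hk]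
    exact Condition.eval_of_strongLT hlt
  · obtain ⟨k, hk⟩ := exists_generic_decides τ c
    rw [limit_eq_eval hk]
    exact Condition.pos_eval hτ hac hc hζ hk
  · obtain ⟨k, hkb⟩ := exists_generic_decides τ b
    obtain ⟨m, hmc⟩ := exists_generic_decides τ c
    have hkb := hkb.mono (generic_monotone (le_max_left k m))
    have hmc := hmc.mono (generic_monotone (le_max_right k m))
    rw [limit_eq_eval hkb, limit_eq_eval hmc]
    exact Condition.eval_lt_eval hτ hab hbc hb hc hξ hkb hmc

theorem specExtends_limit {τ : Ordinal} (hτ : τ ∈ S.I) :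
    SpecExtends S.T (S.amin τ) S.γ (S.f τ) (S.limit τ) := fun _ _ hζ hc _ =>
  limit_of_height_le hτ hc hζ

theorem specConsistent_limit {τ : Ordinal} (hτ : τ ∈ S.A) :
    SpecConsistent S.T (S.amin τ) (S.limit τ) S.γ S.Q S.X := by
  intro q hq c hcX hac hlt
  have hc : IsTupleOfHeight S.T c S.δ := fun i => S.X_height _ (hcX i)
  obtain ⟨k, hk⟩ := exists_generic_mem
    (.inl ⟨(τ, c), S.A_subset hτ, hac, S.δ, S.γ_lt_δ, le_rfl, hc⟩ : S.Task)
  rw [limit_eq_eval (Or.inl hk), Condition.eval_of_mem hk]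
  exact (S.generic k).lt_cap _ hk hτ ⟨c, hcX, le_rfl⟩ q hq
    ((limit_of_height_le (S.A_subset hτ) (isTupleOfHeight_restrictTuple hc S.γ_lt_δ.le)
      le_rfl).symm.trans_lt hlt)

theorem suitableFamily_limit : SuitableFamily S.T S.amin S.I S.δ S.limit := by
  intro lo hi hlh hhi B hB hBI R hR hRpos t ht htlev l hnl a ha halev idx hidx c hc
  obtain ⟨k, b, hb, hbidx, hans⟩ := exists_generic_mem (.inr ⟨⟨lo, hi, B, R, t, l, a, idx, c⟩,
    ⟨hlh, hhi, hB, hBI, hR, hRpos, ht, htlev, hnl, ha, halev, hidx, hc⟩⟩ : S.Task)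
  refine ⟨b, hb, hbidx, fun τ hτ q hq d hdb had hlt => ?_⟩
  obtain ⟨hd, hdlo, hcons⟩ := hans τ hτ d hdb had
  rw [limit_eq_eval hd]
  exact hcons q hq ((limit_eq_eval hdlo).symm.trans_lt hlt)

end ExtensionProblem

theorem suitable_family_extension_general
    (T : OmegaOneTree α) (n : ℕ)
    (amin : Ordinal → Fin (n + 1) → α)
    (hamin : ∀ τ : Ordinal, τ < omega1 → ∃ β, MinimalTuple T (amin τ) β)
    (γ δ : Ordinal) (hγδ : γ < δ) (hδ : δ < omega1)
    (I : Set Ordinal) (hI : I ⊆ Set.Iio omega1) (hIc : I.Countable)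
    (f : Ordinal → (Fin (n + 1) → α) → ℚ)
    (hffam : ∀ τ ∈ I, IsSpecFun T (amin τ) γ (f τ))
    (hfsuit : SuitableFamily T amin I γ f)
    (Q : Set ℚ) (hQfin : Q.Finite) (hQpos : ∀ q ∈ Q, 0 < q)
    (A : Set Ordinal) (hAsub : A ⊆ I)
    (X : Set α) (hXlev : ∀ x ∈ X, T.height x = δ) :
    ∃ g : Ordinal → (Fin (n + 1) → α) → ℚ,
      (∀ τ ∈ I, IsSpecFun T (amin τ) δ (g τ)) ∧
      SuitableFamily T amin I δ g ∧
      (∀ τ ∈ I, SpecExtends T (amin τ) γ (f τ) (g τ)) ∧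
      (∀ τ ∈ A, SpecConsistent T (amin τ) (g τ) γ Q X) := by
  let S : ExtensionProblem α :=
    { T, n, amin, I, γ, δ, f, Q, A, X,
      amin_spec := fun τ hτ =>
        let ⟨β, hβ, hinj, _⟩ := hamin τ (hI hτ)
        ⟨β, hβ, hinj⟩
      γ_lt_δ := hγδ, δ_lt_omega1 := hδ, I_countable := hIc, f_spec := hffam,
      f_suitable := hfsuit, Q_finite := hQfin, Q_pos := hQpos, A_subset := hAsub,
      X_height := hXlev }
  exact ⟨S.limit, fun _ => S.isSpecFun_limit, S.suitableFamily_limit, fun _ => S.specExtends_limit,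
    fun _ => S.specConsistent_limit⟩

/-- Proposition 3.10: a suitable specializing family with top level `γ` extends to a
suitable specializing family with any higher countable top level `δ`, preserving
consistency on a prescribed finite set `X ⊆ T_δ` with unique drop-downs to `γ`. -/
theorem suitable_family_extension
    (T : OmegaOneTree α) (n : ℕ) (hn : 1 ≤ n)
    (amin : Ordinal → Fin (n + 1) → α)
    (hamin : ∀ τ : Ordinal, τ < omega1 → ∃ β, MinimalTuple T (amin τ) β)
    (γ δ : Ordinal) (hγδ : γ < δ) (hδ : δ < omega1)
    (I : Set Ordinal) (hI : I ⊆ Set.Iio omega1) (hIc : I.Countable)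
    (f : Ordinal → (Fin (n + 1) → α) → ℚ)
    (hffam : ∀ τ ∈ I, IsSpecFun T (amin τ) γ (f τ))
    (hfsuit : SuitableFamily T amin I γ f)
    (Q : Set ℚ) (hQfin : Q.Finite) (hQpos : ∀ q ∈ Q, 0 < q)
    (A : Set Ordinal) (hAsub : A ⊆ I) (hAfin : A.Finite)
    (X : Set α) (hXfin : X.Finite) (hXlev : ∀ x ∈ X, T.height x = δ)
    (hXdrop : Set.InjOn (fun x => T.restrict x γ) X) :
    ∃ g : Ordinal → (Fin (n + 1) → α) → ℚ,
      (∀ τ ∈ I, IsSpecFun T (amin τ) δ (g τ)) ∧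
      SuitableFamily T amin I δ g ∧
      (∀ τ ∈ I, SpecExtends T (amin τ) γ (f τ) (g τ)) ∧
      (∀ τ ∈ A, SpecConsistent T (amin τ) (g τ) γ Q X) :=
  suitable_family_extension_general T n amin hamin γ δ hγδ hδ I hI hIc f hffam hfsuit Q hQfin hQpos
    A hAsub X hXlev
end
end

section
/- (Key Property for automorphisms) Let α < β < ω₁. Suppose a_0,…,a_{n-1} are distinct elements of T_α and G = {g_τ : τ ∈ A} is a finite indexed family of automorphisms of T↾(β+1) such that the family of restrictions {g_τ↾(α+1) : τ ∈ A} is separated on (a_0,…,a_{n-1}). Let t ⊆ T_β be finite. Then there exist b_0,…,b_{n-1} ∈ T_β \ t such that a_i <_T b_i for all i < n and, for all τ ∈ A, (a_0,…,a_{n-1}) and (b_0,…,b_{n-1}) are g_τ-consistent. -/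
noncomputable section

variable {α : Type} [PartialOrder α]

/-- The pair `(g, g')` is an automorphism of `T↾(β+1)` together with its inverse:
both are level preserving on `T↾(β+1)`, mutually inverse there, and strictly
increasing there (hence `g` is an order isomorphism of `T↾(β+1)` onto itself). -/
def IsTreeAuto (T : OmegaOneTree α) (β : Ordinal) (g g' : α → α) : Prop :=
  (∀ x : α, T.height x ≤ β → T.height (g x) = T.height x) ∧
  (∀ x : α, T.height x ≤ β → T.height (g' x) = T.height x) ∧
  (∀ x : α, T.height x ≤ β → g' (g x) = x) ∧
  (∀ x : α, T.height x ≤ β → g (g' x) = x) ∧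
  (∀ x y : α, T.height y ≤ β → x < y → g x < g y) ∧
  (∀ x y : α, T.height y ≤ β → x < y → g' x < g' y)

/-- `(g, g')` extends `(f, f')` on `T↾(γ+1)` (i.e. `f ⊆ g` for automorphisms). -/
def AutoExtends (T : OmegaOneTree α) (γ : Ordinal) (f f' g g' : α → α) : Prop :=
  (∀ x : α, T.height x ≤ γ → g x = f x) ∧ (∀ x : α, T.height x ≤ γ → g' x = f' x)

/-- `X↾lo` and `X` are `g`-consistent: for all `x, y ∈ X`,
`g(x↾lo) = y↾lo` iff `g(x) = y`. -/
def AutoConsistentSet (T : OmegaOneTree α) (g : α → α) (lo : Ordinal) (X : Set α) : Prop :=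
  ∀ x ∈ X, ∀ y ∈ X, (g (T.restrict x lo) = T.restrict y lo ↔ g x = y)

/-- The tuples `a` and `b` (with `a = b↾lo` componentwise) are `g`-consistent:
for all `i, j`, `g(a i) = a j` iff `g(b i) = b j`. -/
def AutoConsistentPair (g : α → α) {n : ℕ} (a b : Fin n → α) : Prop :=
  ∀ i j : Fin n, (g (a i) = a j ↔ g (b i) = b j)

/-- The indexed family of automorphisms `(g, g')` is separated on the injective
tuple `a`: no member of the tuple satisfies a relation with itself, and each
member satisfies at most one relation `g_τ^m(a k) = a i` with earlier members. -/
def AutoSepTuple {ι : Type} (g g' : ι → α → α) {n : ℕ} (a : Fin n → α) : Prop :=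
  (∀ (k : Fin n) (τ : ι), g τ (a k) ≠ a k) ∧
  ∀ (k i₁ i₂ : Fin n) (m₁ m₂ : Bool) (τ₁ τ₂ : ι), i₁ < k → i₂ < k →
    cond m₁ (g τ₁ (a k)) (g' τ₁ (a k)) = a i₁ →
    cond m₂ (g τ₂ (a k)) (g' τ₂ (a k)) = a i₂ →
    i₁ = i₂ ∧ m₁ = m₂ ∧ τ₁ = τ₂

/-- The indexed family of automorphisms `(g, g')` is separated on the finite set
`X`: some injective tuple listing the elements of `X` witnesses separation. -/
def AutoSepSet {ι : Type} (g g' : ι → α → α) (X : Set α) : Prop :=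
  ∃ (n : ℕ) (a : Fin n → α), Function.Injective a ∧ Set.range a = X ∧ AutoSepTuple g g' a

/-- The indexed family of automorphisms `(g, g')` of `T↾(β+1)` is separated:
it is separated on every finite subset of the level `T_β`. -/
def AutoSeparated (T : OmegaOneTree α) (β : Ordinal) {ι : Type} (g g' : ι → α → α) : Prop :=
  ∀ X : Set α, X.Finite → (∀ x ∈ X, T.height x = β) → AutoSepSet g g' X

/-! Build `b` one coordinate at a time. If `a k` is related to an earlier `a i` by some
`g_τ^{±1}`, separation makes this relation unique, so `b k := g_τ^{∓1}(b i)` is forced; it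
lies above `a k` and respects every relation of `a k` with earlier coordinates. Otherwise `b k`
is chosen among the infinitely many nodes of `T_β` above `a k`. A forced node stays outside `t`
as long as the earlier nodes avoid the images of `t`, so the induction on `n` enlarges `t` by
these images. The converse half of consistency is automatic: restrict to the level of `a`. -/

namespace OmegaOneTree

variable (T : OmegaOneTree α) {x y : α}

theorem height_le_height (hxy : x ≤ y) : T.height x ≤ T.height y :=
  hxy.eq_or_lt.elim (fun h => h ▸ le_rfl) fun h => (T.height_strictMono h).le

theorem exists_le_height_eq {β : Ordinal} (hx : T.height x ≤ β) (hβ : β < omega1) :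
    ∃ y, x ≤ y ∧ T.height y = β := by
  rcases hx.eq_or_lt with hx | hx
  · exact ⟨x, le_rfl, hx⟩
  · obtain ⟨y, hxy, hy⟩ := T.exists_above x hx hβ
    exact ⟨y, hxy.le, hy⟩

/-- Restriction to level `height x + 1` maps the nodes of `T_β` above `x` onto the infinitely
many immediate successors of `x`. -/
theorem infinite_setOf_lt_height_eq {β : Ordinal} (hx : T.height x < β) (hβ : β < omega1) :
    {y | x < y ∧ T.height y = β}.Infinite := by
  refine ((T.splitting x).mono ?_).of_image (T.restrict · (T.height x + 1))
  rintro s ⟨hxs, hs⟩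
  obtain ⟨y, hsy, hy⟩ := T.exists_le_height_eq (hs.trans_le (Order.add_one_le_of_lt hx)) hβ
  exact ⟨y, ⟨hxs.trans_le hsy, hy⟩, T.restrict_eq hsy hs⟩

end OmegaOneTree

namespace IsTreeAuto

variable {T : OmegaOneTree α} {β : Ordinal} {g g' : α → α} {x y : α}

theorem symm (hg : IsTreeAuto T β g g') : IsTreeAuto T β g' g :=
  let ⟨h₁, h₂, h₃, h₄, h₅, h₆⟩ := hg
  ⟨h₂, h₁, h₄, h₃, h₆, h₅⟩

theorem cond (hg : IsTreeAuto T β g g') (m : Bool) :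
    IsTreeAuto T β (fun x => cond m (g x) (g' x)) (fun x => cond m (g' x) (g x)) := by
  cases m
  exacts [hg.symm, hg]

theorem height_apply (hg : IsTreeAuto T β g g') (hx : T.height x ≤ β) :
    T.height (g x) = T.height x :=
  hg.1 x hx

theorem inv_apply_apply (hg : IsTreeAuto T β g g') (hx : T.height x ≤ β) : g' (g x) = x :=
  hg.2.2.1 x hx

theorem apply_lt_apply (hg : IsTreeAuto T β g g') (hy : T.height y ≤ β) (hxy : x < y) :
    g x < g y :=
  hg.2.2.2.2.1 x y hy hxy

theorem apply_eq_iff_eq_inv_apply (hg : IsTreeAuto T β g g') (hx : T.height x ≤ β)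
    (hy : T.height y ≤ β) : g x = y ↔ x = g' y := by
  constructor
  · rintro rfl
    exact (hg.inv_apply_apply hx).symm
  · rintro rfl
    exact hg.symm.inv_apply_apply hy

theorem restrict_apply (hg : IsTreeAuto T β g g') (hy : T.height y ≤ β) (hxy : x ≤ y) :
    T.restrict (g y) (T.height x) = g x := by
  have hx : T.height x ≤ β := (T.height_le_height hxy).trans hy
  refine T.restrict_eq ?_ (hg.height_apply hx)
  rcases hxy.eq_or_lt with rfl | hxy
  exacts [le_rfl, (hg.apply_lt_apply hy hxy).le]

/-- Only the forward implications need to be arranged: the backward ones hold because `g`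
commutes with restriction to the level of the `a i`. -/
theorem autoConsistentPair {n : ℕ} {a b : Fin n → α} {lo : Ordinal}
    (hg : IsTreeAuto T β g g') (ha : ∀ i, T.height (a i) = lo) (hb : ∀ i, T.height (b i) ≤ β)
    (hab : ∀ i, a i ≤ b i) (hfwd : ∀ i j, g (a i) = a j → g (b i) = b j) :
    AutoConsistentPair g a b := by
  refine fun i j => ⟨hfwd i j, fun hij => ?_⟩
  calc g (a i) = T.restrict (g (b i)) lo := by rw [← ha i, hg.restrict_apply (hb i) (hab i)]
    _ = a j := by rw [hij, T.restrict_eq (hab j) (ha j)]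

end IsTreeAuto

def autoImage {X ι : Type*} (g g' : ι → X → X) (t : Set X) : Set X :=
  ⋃ (τ) (m : Bool), (fun x => cond m (g τ x) (g' τ x)) '' t

theorem autoImage_finite {X ι : Type*} [Finite ι] (g g' : ι → X → X) {t : Set X}
    (ht : t.Finite) : (autoImage g g' t).Finite :=
  Set.finite_iUnion fun _ => Set.finite_iUnion fun _ => ht.image _

theorem cond_mem_autoImage {X ι : Type*} {g g' : ι → X → X} {t : Set X} {x : X} (hx : x ∈ t)
    (τ : ι) (m : Bool) : cond m (g τ x) (g' τ x) ∈ autoImage g g' t :=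
  Set.mem_iUnion₂.2 ⟨τ, m, x, hx, rfl⟩

namespace AutoSepTuple

variable {T : OmegaOneTree α} {hi : Ordinal} {ι : Type} {g g' : ι → α → α}

theorem comp_strictMono {X : Type} {g g' : ι → X → X} {m n : ℕ} {a : Fin n → X}
    (hsep : AutoSepTuple g g' a) {f : Fin m → Fin n} (hf : StrictMono f) : AutoSepTuple g g' (a ∘ f) := by
  refine ⟨fun k τ => hsep.1 (f k) τ, fun k i₁ i₂ m₁ m₂ τ₁ τ₂ h₁ h₂ e₁ e₂ => ?_⟩
  obtain ⟨hi, hm, hτ⟩ := hsep.2 (f k) (f i₁) (f i₂) m₁ m₂ τ₁ τ₂ (hf h₁) (hf h₂) e₁ e₂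
  exact ⟨hf.injective hi, hm, hτ⟩

theorem exists_snoc_extension {n : ℕ} {a : Fin (n + 1) → α} (hsep : AutoSepTuple g g' a)
    (hg : ∀ τ, IsTreeAuto T hi (g τ) (g' τ)) (hhi : hi < omega1) (ha : ∀ i, T.height (a i) < hi)
    {b : Fin n → α} (hb : ∀ i, T.height (b i) = hi ∧ a i.castSucc < b i) {t : Set α}
    (ht : t.Finite) (hbt : ∀ i, b i ∉ autoImage g g' t) :
    ∃ x, T.height x = hi ∧ x ∉ t ∧ a (Fin.last n) < x ∧
      ∀ i m τ, cond m (g τ (a (Fin.last n))) (g' τ (a (Fin.last n))) = a i.castSucc →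
        cond m (g τ x) (g' τ x) = b i := by
  by_cases hforced : ∃ (i : Fin n) (m : Bool) (τ : ι),
      cond m (g τ (a (Fin.last n))) (g' τ (a (Fin.last n))) = a i.castSucc
  · obtain ⟨i₀, m₀, τ₀, hrel₀⟩ := hforced
    have hh := (hg τ₀).cond m₀
    have hlast : a (Fin.last n) = cond m₀ (g' τ₀ (a i₀.castSucc)) (g τ₀ (a i₀.castSucc)) :=
      (hh.apply_eq_iff_eq_inv_apply (ha _).le (ha _).le).1 hrel₀
    have hb₀ : T.height (b i₀) ≤ hi := (hb i₀).1.le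
    refine ⟨cond m₀ (g' τ₀ (b i₀)) (g τ₀ (b i₀)),
      (hh.symm.height_apply hb₀).trans (hb i₀).1, fun hx => hbt i₀ ?_,
      hlast ▸ hh.symm.apply_lt_apply hb₀ (hb i₀).2, fun i m τ hrel => ?_⟩
    · simpa only [hh.symm.inv_apply_apply hb₀] using
        cond_mem_autoImage (g := g) (g' := g') hx τ₀ m₀
    · obtain ⟨hi, rfl, rfl⟩ := hsep.2 _ _ _ m m₀ τ τ₀ (Fin.castSucc_lt_last i)
        (Fin.castSucc_lt_last i₀) hrel hrel₀
      rw [Fin.castSucc_injective n hi]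
      exact hh.symm.inv_apply_apply hb₀
  · obtain ⟨x, ⟨hax, hx⟩, hxt⟩ :=
      ((T.infinite_setOf_lt_height_eq (ha (Fin.last n)) hhi).sdiff ht).nonempty
    exact ⟨x, hx, hxt, hax, fun i m τ hrel => (hforced ⟨i, m, τ, hrel⟩).elim⟩

theorem exists_lift [Finite ι] (hg : ∀ τ, IsTreeAuto T hi (g τ) (g' τ)) (hhi : hi < omega1) :
    ∀ {n : ℕ} {a : Fin n → α}, AutoSepTuple g g' a → (∀ i, T.height (a i) < hi) →
      ∀ t : Set α, t.Finite → ∃ b : Fin n → α,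
        (∀ i, T.height (b i) = hi ∧ b i ∉ t ∧ a i < b i) ∧
        ∀ τ i j, g τ (a i) = a j → g τ (b i) = b j
  | 0, _, _, _, _, _ => ⟨finZeroElim, finZeroElim, fun _ => finZeroElim⟩
  | n + 1, a, hsep, ha, t, ht => by
    obtain ⟨b, hb, hbrel⟩ := exists_lift hg hhi (hsep.comp_strictMono Fin.strictMono_castSucc)
      (fun i => ha i.castSucc) (t ∪ autoImage g g' t) (ht.union (autoImage_finite g g' ht))
    obtain ⟨x, hx, hxt, hax, hxrel⟩ := hsep.exists_snoc_extension hg hhi ha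
      (fun i => ⟨(hb i).1, (hb i).2.2⟩) ht (fun i hbi => (hb i).2.1 (Or.inr hbi))
    refine ⟨Fin.snoc b x, fun i => ?_, fun τ i j => ?_⟩
    · induction i using Fin.lastCases
      · simpa using ⟨hx, hxt, hax⟩
      · simpa using ⟨(hb _).1, fun hbi => (hb _).2.1 (Or.inl hbi), (hb _).2.2⟩
    induction i using Fin.lastCases <;> induction j using Fin.lastCases <;>
      simp only [Fin.snoc_last, Fin.snoc_castSucc]
    case last.last => exact fun h => (hsep.1 _ τ h).elim
    case last.cast j => exact hxrel j true τ
    case cast.last i =>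
      rw [(hg τ).apply_eq_iff_eq_inv_apply (ha _).le (ha _).le,
        (hg τ).apply_eq_iff_eq_inv_apply (hb i).1.le hx.le, eq_comm, eq_comm (b := g' τ x)]
      exact hxrel i false τ
    case cast.cast i j => exact hbrel τ i j

end AutoSepTuple

theorem auto_key_property_general
    (T : OmegaOneTree α)
    (lo hi : Ordinal) (hlohi : lo < hi) (hhi : hi < omega1)
    (n : ℕ) (a : Fin n → α)
    (halev : ∀ i, T.height (a i) = lo)
    {ι : Type} [Finite ι] (g g' : ι → α → α)
    (hg : ∀ τ, IsTreeAuto T hi (g τ) (g' τ))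
    (hsep : AutoSepTuple g g' a)
    (t : Set α) (htfin : t.Finite) :
    ∃ b : Fin n → α,
      (∀ i, T.height (b i) = hi ∧ b i ∉ t ∧ a i < b i) ∧
      ∀ τ : ι, AutoConsistentPair (g τ) a b := by
  obtain ⟨b, hb, hbrel⟩ :=
    hsep.exists_lift hg hhi (fun i => (halev i).trans_lt hlohi) t htfin
  exact ⟨b, hb, fun τ => (hg τ).autoConsistentPair halev (fun i => (hb i).1.le)
    (fun i => (hb i).2.2.le) (hbrel τ)⟩

/-- Proposition 5.11 (Key Property for automorphisms). -/
theorem auto_key_property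
    (T : OmegaOneTree α)
    (lo hi : Ordinal) (hlohi : lo < hi) (hhi : hi < omega1)
    (n : ℕ) (a : Fin n → α) (hainj : Function.Injective a)
    (halev : ∀ i, T.height (a i) = lo)
    {ι : Type} [Finite ι] (g g' : ι → α → α)
    (hg : ∀ τ, IsTreeAuto T hi (g τ) (g' τ))
    (hsep : AutoSepTuple g g' a)
    (t : Set α) (htfin : t.Finite) (htlev : ∀ x ∈ t, T.height x = hi) :
    ∃ b : Fin n → α,
      (∀ i, T.height (b i) = hi ∧ b i ∉ t ∧ a i < b i) ∧
      ∀ τ : ι, AutoConsistentPair (g τ) a b :=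
  auto_key_property_general T lo hi hlohi hhi n a halev g g' hg hsep t htfin
end
end
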